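/- Under the Chatterjea–Kannan contractive condition on a 0-complete partial b-metric space with coefficient s ≥ 1 (five nonnegative constants λ₁,…,λ₅ with λ₁ + λ₂ + 2sλ₃ + sλ₄ + sλ₅ < 1), the Picard iterates xₙ₊₁ = Txₙ satisfy p(xₙ, xₙ₊₁) ≤ λ p(xₙ₋₁, xₙ) where λ = (2λ₁ + 2sλ₃ + sλ₄ + sλ₅)/(2 − 2λ₂ − 2sλ₃ − sλ₄ − sλ₅), and 0 ≤ λ < 1. -/

import Mathlib

/-!
Write `P = p(x, Tx)` and `Q = p(Tx, T²x)`. Applying the contraction to `(x, Tx)` and to `(Tx, x)`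
and adding the two inequalities makes the `λ₄`- and `λ₅`-terms symmetric; the remaining cross
distance `p(x, T²x)` is then removed by the triangle inequality together with `p(Tx, Tx) ≤ P`.
If `Q > P`, every term on the right is at most a multiple of `Q` whose coefficient is `< 2` by the
hypothesis on the `λᵢ`, which is absurd. Hence `Q ≤ P`, and then every fraction is at most
`s (P + Q)`, which rearranges to `Q ≤ λ P`.
-/

def IsPartialBMetric {X : Type*} (p : X → X → ℝ) (s : ℝ) : Prop :=
  1 ≤ s ∧
  (∀ x y, 0 ≤ p x y) ∧
  (∀ x y : X, x = y ↔ (p x x = p x y ∧ p x y = p y y)) ∧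
  (∀ x y, p x x ≤ p x y) ∧
  (∀ x y, p x y = p y x) ∧
  (∀ x y z, p x y + p z z ≤ s * (p x z + p z y))

namespace IsPartialBMetric

variable {X : Type*} {p : X → X → ℝ} {s : ℝ}

theorem one_le (hp : IsPartialBMetric p s) : 1 ≤ s := hp.1

theorem nonneg (hp : IsPartialBMetric p s) (x y : X) : 0 ≤ p x y := hp.2.1 x y

theorem self_le (hp : IsPartialBMetric p s) (x y : X) : p x x ≤ p x y := hp.2.2.2.1 x y

theorem comm (hp : IsPartialBMetric p s) (x y : X) : p x y = p y x := hp.2.2.2.2.1 x y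

theorem triangle (hp : IsPartialBMetric p s) (x y z : X) :
    p x y + p z z ≤ s * (p x z + p z y) :=
  hp.2.2.2.2.2 x y z

end IsPartialBMetric

def IsChatterjeaKannanContraction {X : Type*} (p : X → X → ℝ) (T : X → X)
    (l₁ l₂ l₃ l₄ l₅ : ℝ) : Prop :=
  ∀ x y, p (T x) (T y) ≤
    l₁ * p x y + l₂ * (p x (T x) * p y (T y) / (1 + p x y)) +
    l₃ * (p x (T y) * p y (T x) / (1 + p x y)) +
    l₄ * (p x (T x) * p x (T y) / (1 + p x y)) +
    l₅ * (p y (T y) * p y (T x) / (1 + p x y))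

noncomputable def contractionRatio (s l₁ l₂ l₃ l₄ l₅ : ℝ) : ℝ :=
  (2 * l₁ + 2 * s * l₃ + s * l₄ + s * l₅) /
    (2 - 2 * l₂ - 2 * s * l₃ - s * l₄ - s * l₅)

section ContractionRatio

variable {s l₁ l₂ l₃ l₄ l₅ : ℝ}

theorem contractionRatio_numerator_nonneg (hs : 0 ≤ s) (h₁ : 0 ≤ l₁) (h₃ : 0 ≤ l₃)
    (h₄ : 0 ≤ l₄) (h₅ : 0 ≤ l₅) : 0 ≤ 2 * l₁ + 2 * s * l₃ + s * l₄ + s * l₅ := by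
  positivity

theorem contractionRatio_denominator_pos (hs : 0 ≤ s) (h₁ : 0 ≤ l₁) (h₃ : 0 ≤ l₃)
    (h₄ : 0 ≤ l₄) (h₅ : 0 ≤ l₅)
    (hsum : l₁ + l₂ + 2 * s * l₃ + s * l₄ + s * l₅ < 1) :
    0 < 2 - 2 * l₂ - 2 * s * l₃ - s * l₄ - s * l₅ := by
  linarith [contractionRatio_numerator_nonneg hs h₁ h₃ h₄ h₅]

theorem contractionRatio_nonneg (hs : 0 ≤ s) (h₁ : 0 ≤ l₁) (h₃ : 0 ≤ l₃)
    (h₄ : 0 ≤ l₄) (h₅ : 0 ≤ l₅)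
    (hsum : l₁ + l₂ + 2 * s * l₃ + s * l₄ + s * l₅ < 1) :
    0 ≤ contractionRatio s l₁ l₂ l₃ l₄ l₅ :=
  div_nonneg (contractionRatio_numerator_nonneg hs h₁ h₃ h₄ h₅)
    (contractionRatio_denominator_pos hs h₁ h₃ h₄ h₅ hsum).le

theorem contractionRatio_lt_one (hs : 0 ≤ s) (h₁ : 0 ≤ l₁) (h₃ : 0 ≤ l₃)
    (h₄ : 0 ≤ l₄) (h₅ : 0 ≤ l₅)
    (hsum : l₁ + l₂ + 2 * s * l₃ + s * l₄ + s * l₅ < 1) :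
    contractionRatio s l₁ l₂ l₃ l₄ l₅ < 1 :=
  (div_lt_one (contractionRatio_denominator_pos hs h₁ h₃ h₄ h₅ hsum)).2 (by linarith)

end ContractionRatio

-- `P = p(x, Tx)`, `Q = p(Tx, T²x)`, `A = p(x, T²x)`, `B = p(Tx, Tx)`, `k = λ₄ + λ₅`.
theorem le_of_symmetrized_step {s l₁ l₂ l₃ k P Q A B : ℝ} (hs : 1 ≤ s)
    (h₁ : 0 ≤ l₁) (h₂ : 0 ≤ l₂) (h₃ : 0 ≤ l₃) (hk : 0 ≤ k)
    (hsum : l₁ + l₂ + 2 * s * l₃ + s * k < 1)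
    (hP : 0 ≤ P) (hB : 0 ≤ B) (hBP : B ≤ P) (hAB : A + B ≤ s * (P + Q))
    (hstep : 2 * Q * (1 + P) ≤
      2 * l₁ * P * (1 + P) + 2 * l₂ * (P * Q) + 2 * l₃ * (A * B) + k * (P * A + Q * B)) :
    Q ≤ P := by
  by_contra! hPQ
  have hD : 0 < 1 + P := by linarith
  have hQD : 0 < Q * (1 + P) := by nlinarith
  have hPQ_le : P * Q ≤ Q * (1 + P) := by nlinarith
  have hA_le : A ≤ 2 * s * Q := by nlinarith
  have hAB_le : A * B ≤ 2 * s * Q * (1 + P) := by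
    nlinarith [mul_le_mul_of_nonneg_right hA_le hB,
      mul_nonneg (by nlinarith : 0 ≤ 2 * s * Q) (by linarith : 0 ≤ 1 + P - B)]
  have hPA_QB : P * A + Q * B ≤ 2 * s * Q * (1 + P) := by
    have hBs : B * (Q - P) ≤ s * P * (Q - P) :=
      mul_le_mul_of_nonneg_right (by nlinarith) (by linarith)
    nlinarith [mul_le_mul_of_nonneg_left hAB hP]
  have hbound : 2 * (Q * (1 + P)) ≤
      (2 * l₁ + 2 * l₂ + 4 * s * l₃ + 2 * s * k) * (Q * (1 + P)) :=
    calc 2 * (Q * (1 + P))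
        ≤ 2 * l₁ * P * (1 + P) + 2 * l₂ * (P * Q) + 2 * l₃ * (A * B)
          + k * (P * A + Q * B) := by linarith
      _ ≤ 2 * l₁ * Q * (1 + P) + 2 * l₂ * (Q * (1 + P)) + 2 * l₃ * (2 * s * Q * (1 + P))
          + k * (2 * s * Q * (1 + P)) := by gcongr
      _ = _ := by ring
  nlinarith

theorem mul_le_mul_of_symmetrized_step {s l₁ l₂ l₃ k P Q A B : ℝ} (hs : 1 ≤ s)
    (h₁ : 0 ≤ l₁) (h₂ : 0 ≤ l₂) (h₃ : 0 ≤ l₃) (hk : 0 ≤ k)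
    (hsum : l₁ + l₂ + 2 * s * l₃ + s * k < 1)
    (hP : 0 ≤ P) (hQ : 0 ≤ Q) (hB : 0 ≤ B) (hBP : B ≤ P) (hAB : A + B ≤ s * (P + Q))
    (hstep : 2 * Q * (1 + P) ≤
      2 * l₁ * P * (1 + P) + 2 * l₂ * (P * Q) + 2 * l₃ * (A * B) + k * (P * A + Q * B)) :
    (2 - 2 * l₂ - 2 * s * l₃ - s * k) * Q ≤ (2 * l₁ + 2 * s * l₃ + s * k) * P := by
  have hQP := le_of_symmetrized_step hs h₁ h₂ h₃ hk hsum hP hB hBP hAB hstep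
  have hD : 0 < 1 + P := by linarith
  have hsPQ : 0 ≤ s * (P + Q) := by positivity
  have hPQ_le : P * Q ≤ Q * (1 + P) := by nlinarith
  have hAB_le : A * B ≤ s * (P + Q) * (1 + P) := by
    nlinarith [mul_le_mul_of_nonneg_right (by linarith : A ≤ s * (P + Q)) hB,
      mul_nonneg hsPQ (by linarith : 0 ≤ 1 + P - B)]
  have hPA_QB : P * A + Q * B ≤ s * (P + Q) * (1 + P) := by
    nlinarith [mul_le_mul_of_nonneg_left hAB hP, mul_nonneg hB (sub_nonneg.2 hQP),
      mul_nonneg hsPQ hD.le]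
  have hbound : 2 * Q * (1 + P) ≤
      (2 * l₁ * P + 2 * l₂ * Q + (2 * l₃ + k) * (s * (P + Q))) * (1 + P) :=
    calc 2 * Q * (1 + P)
        ≤ 2 * l₁ * P * (1 + P) + 2 * l₂ * (P * Q) + 2 * l₃ * (A * B)
          + k * (P * A + Q * B) := hstep
      _ ≤ 2 * l₁ * P * (1 + P) + 2 * l₂ * (Q * (1 + P)) + 2 * l₃ * (s * (P + Q) * (1 + P))
          + k * (s * (P + Q) * (1 + P)) := by gcongr
      _ = _ := by ring
  have := le_of_mul_le_mul_right hbound hD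
  linarith

namespace IsChatterjeaKannanContraction

variable {X : Type*} {p : X → X → ℝ} {T : X → X} {l₁ l₂ l₃ l₄ l₅ : ℝ}

theorem symmetrized_step (hT : IsChatterjeaKannanContraction p T l₁ l₂ l₃ l₄ l₅)
    (hcomm : ∀ x y, p x y = p y x) (hnonneg : ∀ x y, 0 ≤ p x y) (x : X) :
    2 * p (T x) (T (T x)) * (1 + p x (T x)) ≤
      2 * l₁ * p x (T x) * (1 + p x (T x)) + 2 * l₂ * (p x (T x) * p (T x) (T (T x))) +
      2 * l₃ * (p x (T (T x)) * p (T x) (T x)) +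
      (l₄ + l₅) * (p x (T x) * p x (T (T x)) + p (T x) (T (T x)) * p (T x) (T x)) := by
  have hforth := hT x (T x)
  have hback := hT (T x) x
  rw [hcomm (T (T x)) (T x), hcomm (T x) x] at hback
  have hD : 0 < 1 + p x (T x) := by linarith [hnonneg x (T x)]
  calc 2 * p (T x) (T (T x)) * (1 + p x (T x))
      ≤ (p (T x) (T (T x)) + p (T x) (T (T x))) * (1 + p x (T x)) := by linarith
    _ ≤ _ := mul_le_mul_of_nonneg_right (add_le_add hforth hback) hD.le
    _ = _ := by field_simp; ring

theorem apply_apply_le {s : ℝ} (hT : IsChatterjeaKannanContraction p T l₁ l₂ l₃ l₄ l₅)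
    (hp : IsPartialBMetric p s) (h₁ : 0 ≤ l₁) (h₂ : 0 ≤ l₂) (h₃ : 0 ≤ l₃) (h₄ : 0 ≤ l₄)
    (h₅ : 0 ≤ l₅) (hsum : l₁ + l₂ + 2 * s * l₃ + s * l₄ + s * l₅ < 1) (x : X) :
    p (T x) (T (T x)) ≤ contractionRatio s l₁ l₂ l₃ l₄ l₅ * p x (T x) := by
  have hs := hp.one_le
  have hstep := mul_le_mul_of_symmetrized_step hs h₁ h₂ h₃ (add_nonneg h₄ h₅) (by linarith)
    (hp.nonneg x (T x)) (hp.nonneg (T x) (T (T x))) (hp.nonneg (T x) (T x))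
    ((hp.self_le (T x) x).trans_eq (hp.comm (T x) x)) (hp.triangle x (T (T x)) (T x))
    (hT.symmetrized_step hp.comm hp.nonneg x)
  rw [contractionRatio, div_mul_eq_mul_div,
    le_div_iff₀ (contractionRatio_denominator_pos (by linarith) h₁ h₃ h₄ h₅ hsum)]
  linarith

end IsChatterjeaKannanContraction

theorem stmt_12 {X : Type*} (p : X → X → ℝ) (s : ℝ)
    (hp : IsPartialBMetric p s) (T : X → X)
    (l₁ l₂ l₃ l₄ l₅ : ℝ)
    (h₁ : 0 ≤ l₁) (h₂ : 0 ≤ l₂) (h₃ : 0 ≤ l₃) (h₄ : 0 ≤ l₄) (h₅ : 0 ≤ l₅)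
    (hsum : l₁ + l₂ + 2 * s * l₃ + s * l₄ + s * l₅ < 1)
    (hT : ∀ x y, p (T x) (T y) ≤
      l₁ * p x y + l₂ * (p x (T x) * p y (T y) / (1 + p x y)) +
      l₃ * (p x (T y) * p y (T x) / (1 + p x y)) +
      l₄ * (p x (T x) * p x (T y) / (1 + p x y)) +
      l₅ * (p y (T y) * p y (T x) / (1 + p x y)))
    (x₀ : X) :
    (0 ≤ (2 * l₁ + 2 * s * l₃ + s * l₄ + s * l₅) /
        (2 - 2 * l₂ - 2 * s * l₃ - s * l₄ - s * l₅)) ∧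
    ((2 * l₁ + 2 * s * l₃ + s * l₄ + s * l₅) /
        (2 - 2 * l₂ - 2 * s * l₃ - s * l₄ - s * l₅) < 1) ∧
    ∀ n : ℕ, p (T^[n + 1] x₀) (T^[n + 2] x₀) ≤
      (2 * l₁ + 2 * s * l₃ + s * l₄ + s * l₅) /
        (2 - 2 * l₂ - 2 * s * l₃ - s * l₄ - s * l₅) * p (T^[n] x₀) (T^[n + 1] x₀) := by
  have hs : 0 ≤ s := zero_le_one.trans hp.one_le
  refine ⟨contractionRatio_nonneg hs h₁ h₃ h₄ h₅ hsum,
    contractionRatio_lt_one hs h₁ h₃ h₄ h₅ hsum, fun n => ?_⟩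
  simp only [Function.iterate_succ_apply']
  exact IsChatterjeaKannanContraction.apply_apply_le hT hp h₁ h₂ h₃ h₄ h₅ hsum _
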